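/- For every real α with 1 < α < 2, the family (g_k^{(α)})_{k∈ℤ} is absolutely summable, its total sum over all integers k equals zero: Σ_{k∈ℤ} g_k^{(α)} = 0, and consequently Σ_{k∈ℤ, k≠0} |g_k^{(α)}| = g_0^{(α)}. -/

import Mathlib

/-!
Since `Γ(s + 1) = s Γ(s)`, the coefficients satisfy `(α/2 + k + 1) g_{k+1} = (k - α/2) g_k`,
so `α g_k = T_k - T_{k+1}` with `T_k = (α/2 + k) g_k`. The same recursion shows `g_k < 0` for
`k ≥ 1` and `|T_{k+1}| / |T_k| = (k - α/2) / (k + α/2) ≤ (2k - 1) / (2k + 1)` for `α ≥ 1`, so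
`T_k → 0` and the sum telescopes to `∑_{k ≥ 0} g_k = T_0 / α = g_0 / 2`. With `g_{-k} = g_k` the
total sum is `g_0/2 + g_0/2 - g_0 = 0`, and as every `g_k` with `k ≠ 0` is negative, their
absolute values sum to `g_0`.
-/

open Real

/-- The fractional centred difference coefficients
`g_k^{(α)} = ((−1)^k Γ(α+1)) / (Γ(α/2 − k + 1) Γ(α/2 + k + 1))`. -/
noncomputable def fracCoeff (α : ℝ) (k : ℤ) : ℝ :=
  ((-1 : ℝ) ^ k * Real.Gamma (α + 1)) /
    (Real.Gamma (α / 2 - (k : ℝ) + 1) * Real.Gamma (α / 2 + (k : ℝ) + 1))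

open Filter Topology

theorem Monotone.hasSum_succ_sub {f : ℕ → ℝ} {l : ℝ} (hf : Monotone f)
    (hl : Tendsto f atTop (𝓝 l)) : HasSum (fun n ↦ f (n + 1) - f n) (l - f 0) := by
  rw [hasSum_iff_tendsto_nat_of_nonneg fun n ↦ sub_nonneg.2 (hf n.le_succ)]
  simpa only [Finset.sum_range_sub] using hl.sub_const (f 0)

theorem tendsto_zero_of_abs_succ_mul_le {u : ℕ → ℝ}
    (hu : ∀ n : ℕ, |u (n + 1)| * (2 * n + 3) ≤ |u n| * (2 * n + 1)) :
    Tendsto u atTop (𝓝 0) := by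
  have hbound : ∀ n : ℕ, |u n| ≤ |u 0| / (2 * n + 1) := by
    intro n
    rw [le_div_iff₀ (by positivity)]
    induction n with
    | zero => simp
    | succ n ih => push_cast; linarith [hu n]
  have hdecay : Tendsto (fun n : ℕ ↦ |u 0| / (2 * n + 1)) atTop (𝓝 0) :=
    tendsto_const_nhds.div_atTop <| tendsto_atTop_add_const_right _ _ <|
      tendsto_natCast_atTop_atTop.const_mul_atTop two_pos
  exact squeeze_zero_norm hbound hdecay

section

variable {α : ℝ}

theorem fracCoeff_neg (k : ℤ) : fracCoeff α (-k) = fracCoeff α k := by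
  simp only [fracCoeff, zpow_neg, ← inv_zpow, inv_neg, inv_one, Int.cast_neg, sub_neg_eq_add]
  rw [mul_comm (Gamma _)]
  ring_nf

theorem fracCoeff_succ_mul (hα : ∀ m : ℤ, α / 2 ≠ m) (k : ℤ) :
    fracCoeff α (k + 1) * (α / 2 + k + 1) = fracCoeff α k * (k - α / 2) := by
  have h₁ : α / 2 - k ≠ 0 := sub_ne_zero.2 (hα k)
  have h₂ : α / 2 + k + 1 ≠ 0 := by
    simpa [add_assoc, add_eq_zero_iff_eq_neg] using hα (-(k + 1))
  have e₂ : α / 2 + ((k + 1 : ℤ) : ℝ) + 1 = (α / 2 + k + 1) + 1 := by push_cast; ring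
  have e₃ : α / 2 - ((k + 1 : ℤ) : ℝ) + 1 = α / 2 - k := by push_cast; ring
  rw [fracCoeff, fracCoeff, e₂, e₃, Gamma_add_one h₁, Gamma_add_one h₂,
    zpow_add_one₀ (by norm_num : (-1 : ℝ) ≠ 0),
    show (k : ℝ) - α / 2 = -(α / 2 - k) by ring]
  -- `Γ(α/2 - k)` may vanish, so only the two linear factors are cancelled.
  generalize Gamma (α / 2 - k) = A, Gamma (α / 2 + k + 1) = B at *
  rw [div_mul_eq_mul_div, div_mul_eq_mul_div, mul_left_comm A, mul_comm _ (α / 2 + k + 1),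
    mul_assoc (α / 2 - k), mul_div_mul_left _ _ h₂,
    mul_comm _ (-(α / 2 - k)), neg_mul, neg_div, mul_div_mul_left _ _ h₁]
  ring

theorem half_ne_intCast (h0 : 0 < α) (h2 : α < 2) (m : ℤ) : α / 2 ≠ m := by
  intro h
  have hm0 : (0 : ℝ) < m := by linarith
  have hm1 : (m : ℝ) < 1 := by linarith
  norm_cast at hm0 hm1
  omega

/-- Once the tails are known to vanish, `fracTail α k = ∑_{j ≥ k} g_j`. -/
noncomputable def fracTail (α : ℝ) (k : ℤ) : ℝ := (α / 2 + k) * fracCoeff α k / α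

theorem fracCoeff_eq_fracTail_sub (hα : ∀ m : ℤ, α / 2 ≠ m) (k : ℤ) :
    fracCoeff α k = fracTail α k - fracTail α (k + 1) := by
  have hα0 : α ≠ 0 := fun h ↦ hα 0 (by simp [h])
  have hrec := fracCoeff_succ_mul hα k
  rw [fracTail, fracTail, Int.cast_add, Int.cast_one, ← add_assoc,
    mul_comm (α / 2 + (k : ℝ) + 1), hrec]
  field_simp
  ring

theorem fracTail_succ_mul (hα : ∀ m : ℤ, α / 2 ≠ m) (k : ℤ) :
    fracTail α (k + 1) * (α / 2 + k) = fracTail α k * (k - α / 2) := by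
  have hrec := fracCoeff_succ_mul hα k
  rw [fracTail, fracTail, Int.cast_add, Int.cast_one, ← add_assoc,
    mul_comm (α / 2 + (k : ℝ) + 1), hrec]
  ring

theorem fracTail_zero (hα : α ≠ 0) : fracTail α 0 = fracCoeff α 0 / 2 := by
  rw [fracTail]
  field_simp
  simp

theorem fracCoeff_zero_pos (hα : -1 < α) : 0 < fracCoeff α 0 := by
  have hG := Gamma_pos_of_pos (show 0 < α / 2 + 1 by linarith)
  simpa [fracCoeff] using div_pos (Gamma_pos_of_pos (show 0 < α + 1 by linarith)) (mul_pos hG hG)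

theorem fracCoeff_natCast_succ_nonpos (h0 : 0 < α) (h2 : α < 2) (n : ℕ) :
    fracCoeff α (n + 1) ≤ 0 := by
  have hrec (m : ℕ) := fracCoeff_succ_mul (half_ne_intCast h0 h2) m
  induction n with
  | zero =>
    have := hrec 0
    push_cast at this ⊢
    nlinarith [fracCoeff_zero_pos (α := α) (by linarith)]
  | succ n ih =>
    have := hrec (n + 1)
    push_cast at this ⊢
    nlinarith

theorem tendsto_fracTail_natCast_succ (h1 : 1 ≤ α) (h2 : α < 2) :
    Tendsto (fun n : ℕ ↦ fracTail α (n + 1)) atTop (𝓝 0) := by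
  refine tendsto_zero_of_abs_succ_mul_le fun n ↦ ?_
  have hn : (0 : ℝ) ≤ n := n.cast_nonneg
  have hrec := congrArg abs (fracTail_succ_mul (half_ne_intCast (by linarith) h2) (n + 1))
  push_cast at hrec ⊢
  rw [abs_mul, abs_mul, abs_of_pos (show 0 < α / 2 + (n + 1) by linarith),
    abs_of_pos (show 0 < (n : ℝ) + 1 - α / 2 by linarith)] at hrec
  refine le_of_mul_le_mul_right ?_ (show 0 < α / 2 + (n + 1) by linarith)
  calc |fracTail α (n + 1 + 1)| * (2 * n + 3) * (α / 2 + (n + 1))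
      = |fracTail α (n + 1)| * (n + 1 - α / 2) * (2 * n + 3) := by rw [mul_right_comm, hrec]
    _ ≤ |fracTail α (n + 1)| * (2 * n + 1) * (α / 2 + (n + 1)) := by
      have : 0 ≤ |fracTail α (n + 1)| * ((n + 1) * (α - 1)) := by
        have := abs_nonneg (fracTail α (n + 1))
        have : (0 : ℝ) ≤ (n + 1) * (α - 1) := mul_nonneg (by linarith) (by linarith)
        positivity
      nlinarith

theorem hasSum_neg_fracCoeff_natCast_succ (h1 : 1 ≤ α) (h2 : α < 2) :
    HasSum (fun n : ℕ ↦ -fracCoeff α (n + 1)) (fracCoeff α 0 / 2) := by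
  have hα := half_ne_intCast (by linarith) h2
  have hstep (n : ℕ) : fracTail α (n + 1 + 1) - fracTail α (n + 1) = -fracCoeff α (n + 1) := by
    rw [fracCoeff_eq_fracTail_sub hα]; ring
  have hmono : Monotone fun n : ℕ ↦ fracTail α (n + 1) := by
    refine monotone_nat_of_le_succ fun n ↦ ?_
    push_cast
    linarith [hstep n, fracCoeff_natCast_succ_nonpos (by linarith) h2 n]
  have htail : fracTail α 1 = -(fracCoeff α 0 / 2) := by
    have h0 := fracCoeff_eq_fracTail_sub hα 0
    rw [zero_add, fracTail_zero (by linarith)] at h0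
    linarith
  have h := hmono.hasSum_succ_sub (tendsto_fracTail_natCast_succ h1 h2)
  push_cast at h
  simpa only [hstep, htail, zero_sub, neg_neg] using h

theorem hasSum_fracCoeff (h1 : 1 ≤ α) (h2 : α < 2) : HasSum (fracCoeff α) 0 := by
  have h := (hasSum_neg_fracCoeff_natCast_succ h1 h2).neg
  simp only [neg_neg] at h
  convert HasSum.of_add_one_of_neg_add_one (f := fracCoeff α) h
    (h.congr_fun fun n ↦ fracCoeff_neg _) using 1
  ring

theorem hasSum_abs_fracCoeff (h1 : 1 ≤ α) (h2 : α < 2) :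
    HasSum (fun k ↦ |fracCoeff α k|) (2 * fracCoeff α 0) := by
  have h := (hasSum_neg_fracCoeff_natCast_succ h1 h2).congr_fun fun n ↦
    abs_of_nonpos (fracCoeff_natCast_succ_nonpos (by linarith) h2 n)
  convert HasSum.of_add_one_of_neg_add_one (f := fun k ↦ |fracCoeff α k|) h
    (h.congr_fun fun n ↦ by rw [fracCoeff_neg]) using 1
  rw [abs_of_pos (fracCoeff_zero_pos (by linarith))]
  ring

end

theorem fracCoeff_summable_sum_zero (α : ℝ) (hα1 : 1 < α) (hα2 : α < 2) :
    Summable (fun k : ℤ => |fracCoeff α k|) ∧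
    ∑' k : ℤ, fracCoeff α k = 0 ∧
    ∑' k : {k : ℤ // k ≠ 0}, |fracCoeff α k| = fracCoeff α 0 := by
  have habs := hasSum_abs_fracCoeff hα1.le hα2
  refine ⟨habs.summable, (hasSum_fracCoeff hα1.le hα2).tsum_eq, ?_⟩
  have h := (Finset.hasSum_compl_iff (f := fun k ↦ |fracCoeff α k|) (a := fracCoeff α 0) {0}).2
    (by rwa [Finset.sum_singleton, abs_of_pos (fracCoeff_zero_pos (by linarith)), ← two_mul])
  exact ((Equiv.subtypeEquivRight (p := fun k : ℤ ↦ k ≠ 0) (q := (· ∉ ({0} : Finset ℤ)))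
    fun _ ↦ Finset.mem_singleton.not.symm).hasSum_iff.2 h).tsum_eq
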